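/- arXiv:1212.2916 — 6 statements merged into one kernel-verified Lean document; each statement's English description precedes it below -/
import Mathlib

section
/- If u, v ∈ ℝ⁴ are nonzero null vectors with η(u,v) = 0, then v is a scalar multiple of u. -/
/-- The Minkowski bilinear form on `ℝ⁴` with signature `(-,+,+,+)`. -/
def eta (x y : Fin 4 → ℝ) : ℝ :=
  -(x 0 * y 0) + x 1 * y 1 + x 2 * y 2 + x 3 * y 3

/-- Two η-orthogonal nonzero null vectors are proportional. -/
theorem null_orthogonal_null_proportional (u v : Fin 4 → ℝ)
    (hu : u ≠ 0) (hv : v ≠ 0) (hunull : eta u u = 0) (hvnull : eta v v = 0)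
    (horth : eta u v = 0) :
    ∃ c : ℝ, v = c • u := by
  unfold eta at hunull hvnull horth
  have hu0 : u 0 ≠ 0 := by
    intro h0
    apply hu
    have h1 : u 1 = 0 := by nlinarith [sq_nonneg (u 1), sq_nonneg (u 2), sq_nonneg (u 3)]
    have h2 : u 2 = 0 := by nlinarith [sq_nonneg (u 1), sq_nonneg (u 2), sq_nonneg (u 3)]
    have h3 : u 3 = 0 := by nlinarith [sq_nonneg (u 1), sq_nonneg (u 2), sq_nonneg (u 3)]
    funext i; fin_cases i <;> simp_all
  have hS : (u 0 * v 1 - v 0 * u 1)^2 + (u 0 * v 2 - v 0 * u 2)^2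
      + (u 0 * v 3 - v 0 * u 3)^2 = 0 := by
    linear_combination (u 0)^2 * hvnull + (v 0)^2 * hunull - 2 * (u 0) * (v 0) * horth
  have n1 := sq_nonneg (u 0 * v 1 - v 0 * u 1)
  have n2 := sq_nonneg (u 0 * v 2 - v 0 * u 2)
  have n3 := sq_nonneg (u 0 * v 3 - v 0 * u 3)
  have e1 : u 0 * v 1 = v 0 * u 1 := by
    have : (u 0 * v 1 - v 0 * u 1)^2 = 0 := by linarith
    have := pow_eq_zero_iff (n := 2) (by norm_num) |>.mp this
    linarith
  have e2 : u 0 * v 2 = v 0 * u 2 := by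
    have : (u 0 * v 2 - v 0 * u 2)^2 = 0 := by linarith
    have := pow_eq_zero_iff (n := 2) (by norm_num) |>.mp this
    linarith
  have e3 : u 0 * v 3 = v 0 * u 3 := by
    have : (u 0 * v 3 - v 0 * u 3)^2 = 0 := by linarith
    have := pow_eq_zero_iff (n := 2) (by norm_num) |>.mp this
    linarith
  refine ⟨v 0 / u 0, ?_⟩
  funext i
  fin_cases i <;> simp [Pi.smul_apply, smul_eq_mul] <;> field_simp <;> linarith
end

section
/- In any null-faced 4-simplex, two hyperfaces are past-type and three are future-type, or vice versa: let ℓ₁, …, ℓ₅ ∈ ℝ⁴ be nonzero null vectors, pairwise linearly independent, with ℓ₁ + ℓ₂ + ℓ₃ + ℓ₄ + ℓ₅ = 0. Then the number of indices i with (ℓᵢ)₀ > 0 is exactly 2 or exactly 3. -/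
def etaForm : LinearMap.BilinForm ℝ (Fin 4 → ℝ) :=
  LinearMap.mk₂ ℝ eta
    (fun _ _ _ => by simp only [eta, Pi.add_apply]; ring)
    (fun _ _ _ => by simp only [eta, Pi.smul_apply, smul_eq_mul]; ring)
    (fun _ _ _ => by simp only [eta, Pi.add_apply]; ring)
    (fun _ _ _ => by simp only [eta, Pi.smul_apply, smul_eq_mul]; ring)

@[simp]
lemma etaForm_apply (x y : Fin 4 → ℝ) : etaForm x y = eta x y := rfl

lemma eta_neg_neg (x y : Fin 4 → ℝ) : eta (-x) (-y) = eta x y := by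
  simp only [← etaForm_apply, map_neg, LinearMap.neg_apply, neg_neg]

lemma eta_sum_sum {ι : Type*} (s : Finset ι) (f : ι → Fin 4 → ℝ) :
    eta (∑ i ∈ s, f i) (∑ j ∈ s, f j) = ∑ i ∈ s, ∑ j ∈ s, eta (f i) (f j) := by
  simp only [← etaForm_apply, map_sum, LinearMap.sum_apply]
  exact Finset.sum_comm

lemma eq_zero_of_apply_zero_of_eta_self_nonpos {x : Fin 4 → ℝ} (hx0 : x 0 = 0)
    (hx : eta x x ≤ 0) : x = 0 := by
  simp only [eta, hx0] at hx
  have h1 : x 1 = 0 := by nlinarith [sq_nonneg (x 1), sq_nonneg (x 2), sq_nonneg (x 3)]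
  have h2 : x 2 = 0 := by nlinarith [sq_nonneg (x 1), sq_nonneg (x 2), sq_nonneg (x 3)]
  have h3 : x 3 = 0 := by nlinarith [sq_nonneg (x 1), sq_nonneg (x 2), sq_nonneg (x 3)]
  ext k
  fin_cases k <;> assumption

lemma apply_zero_ne_zero_of_eta_self_eq_zero {x : Fin 4 → ℝ} (hx : x ≠ 0)
    (hnull : eta x x = 0) : x 0 ≠ 0 :=
  fun hx0 => hx (eq_zero_of_apply_zero_of_eta_self_nonpos hx0 hnull.le)

/-- The spatial vector `w = v₀ u - u₀ v` has `η(w, w) = -2 u₀ v₀ η(u, v)`, so `η(u, v) ≥ 0`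
would force `w = 0`. -/
lemma eta_neg_of_null_of_linearIndependent {u v : Fin 4 → ℝ} (hu : eta u u = 0)
    (hv : eta v v = 0) (horient : 0 < u 0 * v 0) (hind : LinearIndependent ℝ ![u, v]) :
    eta u v < 0 := by
  by_contra! huv
  set w := v 0 • u + (-u 0) • v with hw
  have hw0 : w 0 = 0 := by
    simp only [hw, Pi.add_apply, Pi.smul_apply, smul_eq_mul]; ring
  have hww : eta w w = -2 * (u 0 * v 0) * eta u v := by
    simp only [eta, hw, Pi.add_apply, Pi.smul_apply, smul_eq_mul] at hu hv ⊢
    linear_combination (v 0) ^ 2 * hu + (u 0) ^ 2 * hv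
  have hw_zero : w = 0 :=
    eq_zero_of_apply_zero_of_eta_self_nonpos hw0 (by rw [hww]; nlinarith)
  obtain ⟨hv0, -⟩ := LinearIndependent.pair_iff.mp hind _ _ hw_zero
  simp [hv0] at horient

lemma eta_sum_self_neg {ι : Type*} {f : ι → Fin 4 → ℝ} {s : Finset ι}
    (hnull : ∀ i ∈ s, eta (f i) (f i) = 0)
    (hpair : ∀ i ∈ s, ∀ j ∈ s, i ≠ j → LinearIndependent ℝ ![f i, f j])
    (horient : ∀ i ∈ s, ∀ j ∈ s, 0 < f i 0 * f j 0) (hs : 1 < s.card) :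
    eta (∑ i ∈ s, f i) (∑ i ∈ s, f i) < 0 := by
  have hterm : ∀ i ∈ s, ∀ j ∈ s, i ≠ j → eta (f i) (f j) < 0 := fun i hi j hj hij =>
    eta_neg_of_null_of_linearIndependent (hnull i hi) (hnull j hj) (horient i hi j hj)
      (hpair i hi j hj hij)
  have hterm_le : ∀ i ∈ s, ∀ j ∈ s, eta (f i) (f j) ≤ 0 := fun i hi j hj => by
    rcases eq_or_ne i j with rfl | hij
    · exact (hnull i hi).le
    · exact (hterm i hi j hj hij).le
  obtain ⟨i, hi, j, hj, hij⟩ := Finset.one_lt_card.mp hs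
  rw [eta_sum_sum, ← Finset.sum_product']
  refine (Finset.sum_lt_sum (g := fun _ => (0 : ℝ)) ?_ ?_).trans_eq Finset.sum_const_zero
  · exact fun p hp => hterm_le _ (Finset.mem_product.mp hp).1 _ (Finset.mem_product.mp hp).2
  · exact ⟨(i, j), Finset.mem_product.mpr ⟨hi, hj⟩, hterm i hi j hj hij⟩

lemma eta_sum_self_eq_zero_of_card_compl_le_one {ι : Type*} [Fintype ι] [DecidableEq ι]
    {f : ι → Fin 4 → ℝ} (hnull : ∀ i, eta (f i) (f i) = 0) (hsum : ∑ i, f i = 0)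
    {s : Finset ι} (hs : sᶜ.card ≤ 1) :
    eta (∑ i ∈ s, f i) (∑ i ∈ s, f i) = 0 := by
  have hcompl : ∑ i ∈ s, f i = -∑ i ∈ sᶜ, f i :=
    eq_neg_of_add_eq_zero_left ((Finset.sum_add_sum_compl s f).trans hsum)
  rw [hcompl, eta_neg_neg]
  rcases Nat.le_one_iff_eq_zero_or_eq_one.mp hs with h | h
  · simp [Finset.card_eq_zero.mp h, eta]
  · obtain ⟨j, hj⟩ := Finset.card_eq_one.mp h
    simpa [hj] using hnull j

lemma card_le_one_or_one_lt_card_compl {ι : Type*} [Fintype ι] [DecidableEq ι]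
    {f : ι → Fin 4 → ℝ} (hnull : ∀ i, eta (f i) (f i) = 0)
    (hpair : ∀ i j, i ≠ j → LinearIndependent ℝ ![f i, f j]) (hsum : ∑ i, f i = 0)
    {s : Finset ι} (horient : ∀ i ∈ s, ∀ j ∈ s, 0 < f i 0 * f j 0) :
    s.card ≤ 1 ∨ 1 < sᶜ.card := by
  by_contra! h
  have hneg := eta_sum_self_neg (fun i _ => hnull i) (fun i _ j _ => hpair i j) horient h.1
  rw [eta_sum_self_eq_zero_of_card_compl_le_one hnull hsum h.2] at hneg
  exact hneg.false

/-- In any null-faced 4-simplex, two hyperfaces are past-type and three are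
future-type, or vice versa: if five nonzero, pairwise linearly independent null
vectors sum to zero, then exactly 2 or exactly 3 of them are future-pointing. -/
theorem nullFaced_simplex_causal_count (ℓ : Fin 5 → Fin 4 → ℝ)
    (hne : ∀ i, ℓ i ≠ 0) (hnull : ∀ i, eta (ℓ i) (ℓ i) = 0)
    (hpair : ∀ i j, i ≠ j → LinearIndependent ℝ ![ℓ i, ℓ j])
    (hsum : ∑ i, ℓ i = 0) :
    (Finset.univ.filter fun i => 0 < ℓ i 0).card = 2 ∨
    (Finset.univ.filter fun i => 0 < ℓ i 0).card = 3 := by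
  set future := Finset.univ.filter fun i => 0 < ℓ i 0
  have hfuture : ∀ i ∈ future, ∀ j ∈ future, 0 < ℓ i 0 * ℓ j 0 := fun i hi j hj =>
    mul_pos (Finset.mem_filter.mp hi).2 (Finset.mem_filter.mp hj).2
  have hpast_neg : ∀ i ∈ futureᶜ, ℓ i 0 < 0 := fun i hi =>
    lt_of_le_of_ne (not_lt.mp (by simpa [future] using hi))
      (apply_zero_ne_zero_of_eta_self_eq_zero (hne i) (hnull i))
  have hpast : ∀ i ∈ futureᶜ, ∀ j ∈ futureᶜ, 0 < ℓ i 0 * ℓ j 0 := fun i hi j hj =>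
    mul_pos_of_neg_of_neg (hpast_neg i hi) (hpast_neg j hj)
  have h₁ := card_le_one_or_one_lt_card_compl hnull hpair hsum hfuture
  have h₂ := card_le_one_or_one_lt_card_compl hnull hpair hsum hpast
  rw [compl_compl] at h₂
  have hcard : futureᶜ.card = 5 - future.card := by simp [Finset.card_compl]
  have hle : future.card ≤ 5 := by simpa using Finset.card_le_univ future
  omega
end

section
/- Volume of a 4-parallelotope from the Gram matrix of its volume normals: let a, b, c, d be a basis of ℝ⁴ and M the 4×4 matrix with columns a, b, c, d. For each i ∈ {1,2,3,4} let ℓᵢ ∈ ℝ⁴ be the (unique) vector such that η(ℓᵢ, v) = det(Mᵢ(v)) for all v ∈ ℝ⁴, where Mᵢ(v) is M with its i-th column replaced by v. Let L be the 4×4 matrix with entries L_{ij} = η(ℓᵢ, ℓⱼ). Then det L = −(det M)⁶; in particular the spacetime volume Ω = |det M| of the parallelotope spanned by a, b, c, d satisfies Ω = |det L|^{1/6}. -/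
/-- The 4×4 matrix whose columns are the vectors `e 0, e 1, e 2, e 3`. -/
def cols (e : Fin 4 → Fin 4 → ℝ) : Matrix (Fin 4) (Fin 4) ℝ :=
  Matrix.of fun i j => e j i

namespace Matrix

variable {n R : Type*} [Fintype n] [CommRing R]

theorem det_updateCol_eq_adjugate_mulVec [DecidableEq n] (A : Matrix n n R) (i : n) (v : n → R) :
    (A.updateCol i v).det = (adjugate A *ᵥ v) i := by
  rw [← cramer_apply, cramer_eq_adjugate_mulVec]

theorem gram_eq_mul_mul_transpose (Λ G : Matrix n n R) :
    (of fun i j => Λ i ⬝ᵥ (G *ᵥ Λ j)) = Λ * G * Λᵀ := by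
  ext i j
  rw [of_apply, dotProduct_mulVec, mul_apply']
  rfl

theorem mul_eq_of_forall_dotProduct_mulVec (Λ G A : Matrix n n R)
    (h : ∀ i v, Λ i ⬝ᵥ (G *ᵥ v) = (A *ᵥ v) i) : Λ * G = A := by
  rw [ext_iff_mulVec]
  intro v
  ext i
  rw [← mulVec_mulVec, ← h]
  rfl

theorem det_mul_mul_transpose_mul_det [DecidableEq n] (Λ G : Matrix n n R) :
    (Λ * G * Λᵀ).det * G.det = (Λ * G).det ^ 2 := by
  simp only [det_mul, det_transpose]
  ring

end Matrix

open Matrix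

def etaMatrix : Matrix (Fin 4) (Fin 4) ℝ := diagonal ![-1, 1, 1, 1]

theorem eta_eq_dotProduct_mulVec (x y : Fin 4 → ℝ) : eta x y = x ⬝ᵥ (etaMatrix *ᵥ y) := by
  simp [eta, etaMatrix, dotProduct, mulVec_diagonal, Fin.sum_univ_four]

theorem det_etaMatrix : etaMatrix.det = -1 := by
  simp [etaMatrix, det_diagonal, Fin.prod_univ_four]

theorem det_gram_of_forall_eta_eq_det_updateCol (M : Matrix (Fin 4) (Fin 4) ℝ)
    (ℓ : Fin 4 → Fin 4 → ℝ) (hℓ : ∀ i v, eta (ℓ i) v = (M.updateCol i v).det) :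
    (of fun i j => eta (ℓ i) (ℓ j)).det = -(M.det ^ 6) := by
  have hΛ : of ℓ * etaMatrix = adjugate M := by
    refine mul_eq_of_forall_dotProduct_mulVec _ _ _ fun i v => ?_
    rw [← det_updateCol_eq_adjugate_mulVec, ← hℓ, eta_eq_dotProduct_mulVec]
    rfl
  have hgram : (of fun i j => eta (ℓ i) (ℓ j)) = of ℓ * etaMatrix * (of ℓ)ᵀ := by
    simp only [eta_eq_dotProduct_mulVec]
    exact gram_eq_mul_mul_transpose (of ℓ) etaMatrix
  have hdet := det_mul_mul_transpose_mul_det (of ℓ) etaMatrix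
  rw [← hgram, hΛ, det_adjugate, det_etaMatrix, Fintype.card_fin] at hdet
  linear_combination -hdet

theorem abs_eq_abs_rpow_of_eq_neg_pow {x y : ℝ} {n : ℕ} (hn : n ≠ 0) (h : y = -(x ^ n)) :
    |x| = |y| ^ ((1 : ℝ) / n) := by
  rw [h, abs_neg, abs_pow, one_div]
  exact (Real.pow_rpow_inv_natCast (abs_nonneg x) hn).symm

theorem parallelotope_volume_from_normals_general (a b c d : Fin 4 → ℝ)
    (ℓ : Fin 4 → Fin 4 → ℝ)
    (hℓ : ∀ i v, eta (ℓ i) v = ((cols ![a, b, c, d]).updateCol i v).det) :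
    (Matrix.of fun i j => eta (ℓ i) (ℓ j)).det = -((cols ![a, b, c, d]).det ^ 6) ∧
    |(cols ![a, b, c, d]).det| =
      |(Matrix.of fun i j => eta (ℓ i) (ℓ j)).det| ^ ((1 : ℝ) / 6) := by
  have hdet := det_gram_of_forall_eta_eq_det_updateCol _ ℓ hℓ
  exact ⟨hdet, mod_cast abs_eq_abs_rpow_of_eq_neg_pow (by norm_num) hdet⟩

/-- Volume of a 4-parallelotope from the Gram matrix of its volume normals:
if `ℓ i` are the volume normals of the hyperfaces of the parallelotope spanned
by the basis `a, b, c, d` (i.e. `η(ℓᵢ, v) = det(M with i-th column replaced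
by v)`), and `L` is their Gram matrix, then `det L = -(det M)⁶`, so the volume
`Ω = |det M|` satisfies `Ω = |det L|^{1/6}`. -/
theorem parallelotope_volume_from_normals (a b c d : Fin 4 → ℝ)
    (hbasis : LinearIndependent ℝ ![a, b, c, d])
    (ℓ : Fin 4 → Fin 4 → ℝ)
    (hℓ : ∀ i v, eta (ℓ i) v = ((cols ![a, b, c, d]).updateCol i v).det) :
    (Matrix.of fun i j => eta (ℓ i) (ℓ j)).det = -((cols ![a, b, c, d]).det ^ 6) ∧
    |(cols ![a, b, c, d]).det| =
      |(Matrix.of fun i j => eta (ℓ i) (ℓ j)).det| ^ ((1 : ℝ) / 6) :=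
  parallelotope_volume_from_normals_general a b c d ℓ hℓ
end

section
/- Rigidity of the doubly-null 4-parallelotope: let a, b, c, d ∈ ℝ⁴ be linearly independent, and suppose that for every 3-element subset {x,y,z} of {a,b,c,d}: (i) the 3×3 Gram matrix (η(x,x), η(x,y), … ) of x, y, z has determinant zero (the hyperface spanned by x, y, z is null), and (ii) η(x+y+z, x+y+z) = 0 (the hyperface diagonal x+y+z is null, i.e. the hyperface is doubly null). Then there exists s > 0 such that η(u,u) = 2s for every u ∈ {a,b,c,d} and η(u,w) = −s for every pair of distinct u, w ∈ {a,b,c,d}. In particular, up to overall scale there is exactly one shape of 4-parallelotope all of whose hyperfaces are doubly-null parallelepipeds, and all its edges are congruent. -/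
lemma eta_symm (x y : Fin 4 → ℝ) : eta x y = eta y x := by simp [eta]; ring

/-- A nonzero null vector has nonzero time component. -/
lemma null_time_ne (v : Fin 4 → ℝ) (hv : eta v v = 0) (h0 : v ≠ 0) : v 0 ≠ 0 := by
  intro h
  apply h0
  simp only [eta, h] at hv
  funext t
  fin_cases t <;> simp [h] <;>
    nlinarith [sq_nonneg (v 1), sq_nonneg (v 2), sq_nonneg (v 3)]

/-- Anything orthogonal to a nonzero null vector is spacelike or null. -/
lemma null_orth_nonneg (v w : Fin 4 → ℝ) (hv : eta v v = 0) (h0 : v ≠ 0)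
    (hvw : eta v w = 0) : 0 ≤ eta w w := by
  have ht := null_time_ne v hv h0
  have ht2 : 0 < v 0 ^ 2 := by positivity
  simp only [eta] at hv hvw ⊢
  have key : v 0 ^ 2 * (-(w 0 * w 0) + w 1 * w 1 + w 2 * w 2 + w 3 * w 3)
      = (v 1 * w 2 - v 2 * w 1) ^ 2 + (v 1 * w 3 - v 3 * w 1) ^ 2
        + (v 2 * w 3 - v 3 * w 2) ^ 2 := by
    linear_combination (-(w 1 * w 1 + w 2 * w 2 + w 3 * w 3)) * hv
      + (v 1 * w 1 + v 2 * w 2 + v 3 * w 3 + v 0 * w 0) * hvw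
  nlinarith [key, ht2, sq_nonneg (v 1 * w 2 - v 2 * w 1),
    sq_nonneg (v 1 * w 3 - v 3 * w 1), sq_nonneg (v 2 * w 3 - v 3 * w 2)]

/-- Two orthogonal null vectors are proportional (the first being nonzero). -/
lemma null_orth_null (v w : Fin 4 → ℝ) (hv : eta v v = 0) (h0 : v ≠ 0)
    (hw : eta w w = 0) (hvw : eta v w = 0) : ∃ l : ℝ, w = fun t => l * v t := by
  have ht := null_time_ne v hv h0
  simp only [eta] at hv hw hvw
  have hAv : v 0 ^ 2 = v 1 ^ 2 + v 2 ^ 2 + v 3 ^ 2 := by linear_combination (-1 : ℝ) * hv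
  have hApos : 0 < v 1 ^ 2 + v 2 ^ 2 + v 3 ^ 2 := by rw [← hAv]; positivity
  have hS : (v 1 * w 2 - v 2 * w 1) ^ 2 + (v 1 * w 3 - v 3 * w 1) ^ 2
      + (v 2 * w 3 - v 3 * w 2) ^ 2 = 0 := by
    linear_combination (w 1 * w 1 + w 2 * w 2 + w 3 * w 3) * hv + (v 0 * v 0) * hw
      - (v 1 * w 1 + v 2 * w 2 + v 3 * w 3 + v 0 * w 0) * hvw
  have m1 : v 1 * w 2 - v 2 * w 1 = 0 := by
    have hle : (v 1 * w 2 - v 2 * w 1) ^ 2 ≤ 0 := by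
      linarith [sq_nonneg (v 1 * w 3 - v 3 * w 1), sq_nonneg (v 2 * w 3 - v 3 * w 2)]
    exact sq_eq_zero_iff.mp (le_antisymm hle (sq_nonneg _))
  have m2 : v 1 * w 3 - v 3 * w 1 = 0 := by
    have hle : (v 1 * w 3 - v 3 * w 1) ^ 2 ≤ 0 := by
      linarith [sq_nonneg (v 1 * w 2 - v 2 * w 1), sq_nonneg (v 2 * w 3 - v 3 * w 2)]
    exact sq_eq_zero_iff.mp (le_antisymm hle (sq_nonneg _))
  have m3 : v 2 * w 3 - v 3 * w 2 = 0 := by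
    have hle : (v 2 * w 3 - v 3 * w 2) ^ 2 ≤ 0 := by
      linarith [sq_nonneg (v 1 * w 2 - v 2 * w 1), sq_nonneg (v 1 * w 3 - v 3 * w 1)]
    exact sq_eq_zero_iff.mp (le_antisymm hle (sq_nonneg _))
  have hAne : (v 1 ^ 2 + v 2 ^ 2 + v 3 ^ 2) ≠ 0 := ne_of_gt hApos
  have c0 : w 0 * (v 1 ^ 2 + v 2 ^ 2 + v 3 ^ 2)
      = (v 1 * w 1 + v 2 * w 2 + v 3 * w 3) * v 0 := by
    have hD0 : v 1 * w 1 + v 2 * w 2 + v 3 * w 3 = v 0 * w 0 := by linarith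
    rw [hD0, ← hAv]; ring
  have c1 : w 1 * (v 1 ^ 2 + v 2 ^ 2 + v 3 ^ 2)
      = (v 1 * w 1 + v 2 * w 2 + v 3 * w 3) * v 1 := by
    linear_combination (-(v 2)) * m1 + (-(v 3)) * m2
  have c2 : w 2 * (v 1 ^ 2 + v 2 ^ 2 + v 3 ^ 2)
      = (v 1 * w 1 + v 2 * w 2 + v 3 * w 3) * v 2 := by
    linear_combination (v 1) * m1 + (-(v 3)) * m3
  have c3 : w 3 * (v 1 ^ 2 + v 2 ^ 2 + v 3 ^ 2)
      = (v 1 * w 1 + v 2 * w 2 + v 3 * w 3) * v 3 := by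
    linear_combination (v 1) * m2 + (v 2) * m3
  refine ⟨(v 1 * w 1 + v 2 * w 2 + v 3 * w 3) / (v 1 ^ 2 + v 2 ^ 2 + v 3 ^ 2), ?_⟩
  funext t
  rw [div_mul_eq_mul_div, eq_div_iff hAne]
  fin_cases t
  · exact c0
  · exact c1
  · exact c2
  · exact c3

lemma inj3 {i j k : Fin 4} (hij : i ≠ j) (hik : i ≠ k) (hjk : j ≠ k) :
    Function.Injective ![i, j, k] := by
  intro a b hab
  fin_cases a <;> fin_cases b <;> simp_all

/-- Key lemma: for a doubly-null face on `u i, u j, u k`, the diagonal is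
orthogonal to each edge, and `u i` is spacelike-or-null. -/
lemma triple_face (u : Fin 4 → Fin 4 → ℝ) (hindep : LinearIndependent ℝ u)
    (i j k : Fin 4) (hij : i ≠ j) (hik : i ≠ k) (hjk : j ≠ k)
    (hdet : (!![eta (u i) (u i), eta (u i) (u j), eta (u i) (u k);
          eta (u j) (u i), eta (u j) (u j), eta (u j) (u k);
          eta (u k) (u i), eta (u k) (u j), eta (u k) (u k)]).det = 0)
    (hdiag : eta (u i + u j + u k) (u i + u j + u k) = 0) :
    (eta (u i) (u i) + eta (u i) (u j) + eta (u i) (u k) = 0) ∧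
    (eta (u i) (u j) + eta (u j) (u j) + eta (u j) (u k) = 0) ∧
    (eta (u i) (u k) + eta (u j) (u k) + eta (u k) (u k) = 0) ∧
    0 ≤ eta (u i) (u i) := by
  have hindep3 := hindep.comp ![i, j, k] (inj3 hij hik hjk)
  obtain ⟨c, hc0, hc⟩ := (Matrix.exists_mulVec_eq_zero_iff).2 hdet
  have r0 := congrFun hc 0
  have r1 := congrFun hc 1
  have r2 := congrFun hc 2
  simp [Matrix.mulVec, dotProduct, Fin.sum_univ_three] at r0 r1 r2
  set n : Fin 4 → ℝ := fun t => c 0 * u i t + c 1 * u j t + c 2 * u k t with hn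
  have Oi : eta n (u i) = 0 := by
    simp only [hn, eta] at r0 ⊢; linear_combination r0
  have Oj : eta n (u j) = 0 := by
    simp only [hn, eta] at r1 ⊢; linear_combination r1
  have Ok : eta n (u k) = 0 := by
    simp only [hn, eta] at r2 ⊢; linear_combination r2
  have hnz : n ≠ 0 := by
    intro h
    apply hc0
    have hsum : ∑ m : Fin 3, c m • (u ∘ ![i, j, k]) m = 0 := by
      rw [Fin.sum_univ_three]
      funext t
      have ht := congrFun h t
      simp only [hn] at ht
      simpa using ht
    have hz := Fintype.linearIndependent_iff.mp hindep3 c hsum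
    funext m; exact hz m
  have hvnz : u i + u j + u k ≠ 0 := by
    intro h
    have hsum : ∑ m : Fin 3, (fun _ : Fin 3 => (1 : ℝ)) m • (u ∘ ![i, j, k]) m = 0 := by
      rw [Fin.sum_univ_three]
      funext t
      simpa using congrFun h t
    have hz := Fintype.linearIndependent_iff.mp hindep3 (fun _ => 1) hsum
    exact one_ne_zero (hz 0)
  have nnull : eta n n = 0 := by
    have Oi' := Oi; have Oj' := Oj; have Ok' := Ok
    simp only [hn, eta] at Oi' Oj' Ok' ⊢
    linear_combination c 0 * Oi' + c 1 * Oj' + c 2 * Ok'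
  have hnv : eta n (u i + u j + u k) = 0 := by
    have Oi' := Oi; have Oj' := Oj; have Ok' := Ok
    simp only [hn, eta, Pi.add_apply] at Oi' Oj' Ok' ⊢
    linear_combination Oi' + Oj' + Ok'
  obtain ⟨l, hl⟩ := null_orth_null n (u i + u j + u k) nnull hnz hdiag hnv
  have di : eta (u i + u j + u k) (u i) = 0 := by
    have : eta (u i + u j + u k) (u i) = l * eta n (u i) := by
      rw [hl]; simp only [eta]; ring
    rw [this, Oi, mul_zero]
  have dj : eta (u i + u j + u k) (u j) = 0 := by
    have : eta (u i + u j + u k) (u j) = l * eta n (u j) := by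
      rw [hl]; simp only [eta]; ring
    rw [this, Oj, mul_zero]
  have dk : eta (u i + u j + u k) (u k) = 0 := by
    have : eta (u i + u j + u k) (u k) = l * eta n (u k) := by
      rw [hl]; simp only [eta]; ring
    rw [this, Ok, mul_zero]
  refine ⟨?_, ?_, ?_, null_orth_nonneg (u i + u j + u k) (u i) hdiag hvnz di⟩
  · have d := di; simp only [eta, Pi.add_apply] at d ⊢; linear_combination d
  · have d := dj; simp only [eta, Pi.add_apply] at d ⊢; linear_combination d
  · have d := dk; simp only [eta, Pi.add_apply] at d ⊢; linear_combination d

/-- Rigidity of the doubly-null 4-parallelotope: if `u 0, u 1, u 2, u 3` are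
linearly independent edge vectors such that every hyperface (spanned by three
of them) is null (degenerate 3×3 Gram matrix) and has a null diagonal (the sum
of its three edge vectors is null), then there is `s > 0` with
`η(uᵢ,uᵢ) = 2s` for all `i` and `η(uᵢ,uⱼ) = −s` for all `i ≠ j`; in particular
all edges are congruent and the shape is unique up to overall scale. -/
theorem doubly_null_parallelotope_rigidity (u : Fin 4 → Fin 4 → ℝ)
    (hindep : LinearIndependent ℝ u)
    (hfaces : ∀ i j k : Fin 4, i ≠ j → i ≠ k → j ≠ k →
      (!![eta (u i) (u i), eta (u i) (u j), eta (u i) (u k);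
          eta (u j) (u i), eta (u j) (u j), eta (u j) (u k);
          eta (u k) (u i), eta (u k) (u j), eta (u k) (u k)]).det = 0 ∧
      eta (u i + u j + u k) (u i + u j + u k) = 0) :
    ∃ s : ℝ, 0 < s ∧ (∀ i, eta (u i) (u i) = 2 * s) ∧
      ∀ i j, i ≠ j → eta (u i) (u j) = -s := by
  obtain ⟨d012, n012⟩ := hfaces 0 1 2 (by decide) (by decide) (by decide)
  obtain ⟨d013, n013⟩ := hfaces 0 1 3 (by decide) (by decide) (by decide)
  obtain ⟨d023, n023⟩ := hfaces 0 2 3 (by decide) (by decide) (by decide)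
  obtain ⟨d123, n123⟩ := hfaces 1 2 3 (by decide) (by decide) (by decide)
  obtain ⟨E1, E2, E3, E4⟩ := triple_face u hindep 0 1 2 (by decide) (by decide) (by decide) d012 n012
  obtain ⟨F1, F2, F3, -⟩ := triple_face u hindep 0 1 3 (by decide) (by decide) (by decide) d013 n013
  obtain ⟨G1, G2, G3, -⟩ := triple_face u hindep 0 2 3 (by decide) (by decide) (by decide) d023 n023
  obtain ⟨H1, H2, H3, -⟩ := triple_face u hindep 1 2 3 (by decide) (by decide) (by decide) d123 n123
  have hpair : ∀ l : ℝ, u 1 ≠ fun t => l * u 0 t := by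
    intro l h
    have hi2 : Function.Injective ![(0 : Fin 4), 1] := by
      intro a b hab; fin_cases a <;> fin_cases b <;> simp_all
    have h2 := hindep.comp ![0, 1] hi2
    have hsum : ∑ m : Fin 2, (![-l, (1 : ℝ)]) m • (u ∘ ![(0 : Fin 4), 1]) m = 0 := by
      rw [Fin.sum_univ_two]
      funext t
      have := congrFun h t
      simp only [Pi.add_apply, Pi.smul_apply, Function.comp_apply, Matrix.cons_val_zero,
        Matrix.cons_val_one, Matrix.head_cons, smul_eq_mul, Pi.zero_apply]
      rw [this]; ring
    have hz := Fintype.linearIndependent_iff.mp h2 ![-l, 1] hsum 1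
    simp at hz
  have hs0 : eta (u 0) (u 1) ≠ 0 := by
    intro h
    have g00 : eta (u 0) (u 0) = 0 := by linarith
    have g11 : eta (u 1) (u 1) = 0 := by linarith
    obtain ⟨l, hl⟩ := null_orth_null (u 0) (u 1) g00 (hindep.ne_zero 0) g11 h
    exact hpair l hl
  set s : ℝ := -(eta (u 0) (u 1)) with hsdef
  have hs : s ≠ 0 := by simpa [hsdef] using hs0
  have D0 : eta (u 0) (u 0) = 2 * s := by linarith
  have D1 : eta (u 1) (u 1) = 2 * s := by linarith
  have D2 : eta (u 2) (u 2) = 2 * s := by linarith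
  have D3 : eta (u 3) (u 3) = 2 * s := by linarith
  have O01 : eta (u 0) (u 1) = -s := by linarith
  have O02 : eta (u 0) (u 2) = -s := by linarith
  have O03 : eta (u 0) (u 3) = -s := by linarith
  have O12 : eta (u 1) (u 2) = -s := by linarith
  have O13 : eta (u 1) (u 3) = -s := by linarith
  have O23 : eta (u 2) (u 3) = -s := by linarith
  have O10 : eta (u 1) (u 0) = -s := by rw [eta_symm]; exact O01
  have O20 : eta (u 2) (u 0) = -s := by rw [eta_symm]; exact O02
  have O30 : eta (u 3) (u 0) = -s := by rw [eta_symm]; exact O03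
  have O21 : eta (u 2) (u 1) = -s := by rw [eta_symm]; exact O12
  have O31 : eta (u 3) (u 1) = -s := by rw [eta_symm]; exact O13
  have O32 : eta (u 3) (u 2) = -s := by rw [eta_symm]; exact O23
  have hspos : 0 < s := lt_of_le_of_ne (by linarith) (Ne.symm hs)
  refine ⟨s, hspos, ?_, ?_⟩
  · intro i
    fin_cases i
    · exact D0
    · exact D1
    · exact D2
    · exact D3
  · intro i j hij
    fin_cases i <;> fin_cases j <;>
      first
        | exact absurd rfl hij
        | exact O01 | exact O02 | exact O03
        | exact O10 | exact O12 | exact O13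
        | exact O20 | exact O21 | exact O23
        | exact O30 | exact O31 | exact O32
end

section
/- Existence of the doubly-null 4-parallelotope: the four vectors u₁ = (1/2, √3/2, √3/2, √3/2), u₂ = (1/2, √3/2, −√3/2, −√3/2), u₃ = (1/2, −√3/2, √3/2, −√3/2), u₄ = (1/2, −√3/2, −√3/2, √3/2) in ℝ⁴ are linearly independent and satisfy η(uᵢ,uᵢ) = 2 for every i and η(uᵢ,uⱼ) = −1 for all i ≠ j; consequently, for every 3-element subset of {u₁,u₂,u₃,u₄} the sum of its elements is a null vector and its 3×3 Gram matrix with respect to η has determinant zero (every hyperface of the parallelotope spanned by u₁, u₂, u₃, u₄ is a doubly-null parallelepiped). -/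
/-- The four edge vectors of the doubly-null 4-parallelotope. -/
noncomputable def dnpEdge : Fin 4 → Fin 4 → ℝ :=
  ![![1 / 2, Real.sqrt 3 / 2, Real.sqrt 3 / 2, Real.sqrt 3 / 2],
    ![1 / 2, Real.sqrt 3 / 2, -(Real.sqrt 3 / 2), -(Real.sqrt 3 / 2)],
    ![1 / 2, -(Real.sqrt 3 / 2), Real.sqrt 3 / 2, -(Real.sqrt 3 / 2)],
    ![1 / 2, -(Real.sqrt 3 / 2), -(Real.sqrt 3 / 2), Real.sqrt 3 / 2]]

/-! All four claims only depend on the Gram matrix `3 I - J` of the edges. Its kernel is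
trivial (a kernel vector `c` has `3 cᵢ = ∑ c` for every `i`, so `∑ c = (4/3) ∑ c`), which
gives linear independence; each principal `3 × 3` minor kills `(1,1,1)`, which makes it
singular and makes the sum of the three edges null. -/

lemma eta_sum_smul_right {ι : Type*} [Fintype ι] (x : Fin 4 → ℝ) (c : ι → ℝ)
    (v : ι → Fin 4 → ℝ) : eta x (∑ i, c i • v i) = ∑ i, c i * eta x (v i) := by
  simp only [eta, Finset.sum_apply, Pi.smul_apply, smul_eq_mul, Finset.mul_sum,
    ← Finset.sum_neg_distrib, ← Finset.sum_add_distrib]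
  exact Finset.sum_congr rfl fun i _ => by ring

lemma eta_add_add_self (a b c : Fin 4 → ℝ) :
    eta (a + b + c) (a + b + c) =
      eta a a + eta b b + eta c c + 2 * (eta a b + eta a c + eta b c) := by
  simp only [eta, Pi.add_apply]; ring

lemma linearIndependent_of_eta_eq_two_of_eta_eq_neg_one {ι : Type*} [Fintype ι]
    (hcard : Fintype.card ι ≠ 3) (v : ι → Fin 4 → ℝ)
    (hself : ∀ i, eta (v i) (v i) = 2) (hoff : ∀ i j, i ≠ j → eta (v i) (v j) = -1) :
    LinearIndependent ℝ v := by
  classical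
  rw [Fintype.linearIndependent_iff]
  intro c hc
  have hkernel : ∀ j, 3 * c j = ∑ i, c i := by
    intro j
    have hgram : ∀ i, eta (v j) (v i) = 3 * (if j = i then 1 else 0) - 1 := fun i => by
      by_cases hji : j = i
      · subst hji; norm_num [hself]
      · simp [hoff j i hji, hji]
    have h := congrArg (eta (v j)) hc
    simp only [eta_sum_smul_right, hgram, mul_sub, mul_one, Finset.sum_sub_distrib,
      mul_ite, mul_zero, Finset.sum_ite_eq, Finset.mem_univ, if_true] at h
    simpa [eta, ← Finset.sum_mul, sub_eq_zero, mul_comm] using h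
  have hsum : ∑ i, c i = 0 := by
    have h : (3 - Fintype.card ι : ℝ) * ∑ i, c i = 0 := by
      rw [sub_mul, Finset.mul_sum, Finset.sum_congr rfl fun j _ => hkernel j]
      simp
    have hcard' : (3 - Fintype.card ι : ℝ) ≠ 0 := sub_ne_zero.2 (by exact_mod_cast hcard.symm)
    exact (mul_eq_zero.1 h).resolve_left hcard'
  intro j
  linarith [hkernel j]

lemma eta_dnpEdge (i j : Fin 4) :
    eta (dnpEdge i) (dnpEdge j) = if i = j then 2 else -1 := by
  have h3 : Real.sqrt 3 * Real.sqrt 3 = 3 := Real.mul_self_sqrt (by norm_num)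
  fin_cases i <;> fin_cases j <;> simp [eta, dnpEdge] <;> nlinarith [h3]

/-- Existence of the doubly-null 4-parallelotope: the four explicit vectors
`uᵢ = (1/2, ±√3/2, ±√3/2, ±√3/2)` are linearly independent, have
`η(uᵢ,uᵢ) = 2` and `η(uᵢ,uⱼ) = −1` for `i ≠ j`, and for every 3-element subset
the sum of its elements is null and its Gram matrix is degenerate: every
hyperface of the spanned parallelotope is a doubly-null parallelepiped. -/
theorem doubly_null_parallelotope_exists :
    LinearIndependent ℝ dnpEdge ∧
    (∀ i, eta (dnpEdge i) (dnpEdge i) = 2) ∧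
    (∀ i j, i ≠ j → eta (dnpEdge i) (dnpEdge j) = -1) ∧
    (∀ i j k : Fin 4, i ≠ j → i ≠ k → j ≠ k →
      eta (dnpEdge i + dnpEdge j + dnpEdge k) (dnpEdge i + dnpEdge j + dnpEdge k) = 0 ∧
      (!![eta (dnpEdge i) (dnpEdge i), eta (dnpEdge i) (dnpEdge j), eta (dnpEdge i) (dnpEdge k);
          eta (dnpEdge j) (dnpEdge i), eta (dnpEdge j) (dnpEdge j), eta (dnpEdge j) (dnpEdge k);
          eta (dnpEdge k) (dnpEdge i), eta (dnpEdge k) (dnpEdge j), eta (dnpEdge k) (dnpEdge k)]).det = 0) := by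
  have hself : ∀ i, eta (dnpEdge i) (dnpEdge i) = 2 := fun i => by simp [eta_dnpEdge]
  have hoff : ∀ i j, i ≠ j → eta (dnpEdge i) (dnpEdge j) = -1 := fun i j h => by
    simp [eta_dnpEdge, h]
  refine ⟨linearIndependent_of_eta_eq_two_of_eta_eq_neg_one (by simp) dnpEdge hself hoff,
    hself, hoff, fun i j k hij hik hjk => ?_⟩
  simp only [eta_add_add_self, eta_dnpEdge, hij, hik, hjk, Ne.symm hij, Ne.symm hik,
    Ne.symm hjk, if_true, if_false]
  simp [Matrix.det_fin_three]
  norm_num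
end

section
/- A null tetrahedron is completely determined by its planar image: let H = {v ∈ ℝ⁴ : v₀ = v₃} be the null hyperplane t = z, and let p, q : Fin 4 → ℝ⁴ be two quadruples of points, all lying in H, such that each quadruple is affinely independent and the planar images agree: (pᵢ)₁ = (qᵢ)₁ and (pᵢ)₂ = (qᵢ)₂ for every i (the two tetrahedra project to the same four points of the quotient plane of lightrays). Then there exist a linear map Λ : ℝ⁴ → ℝ⁴ preserving η (η(Λu, Λv) = η(u,v) for all u, v) and a translation vector w ∈ ℝ⁴ such that Λ pᵢ + w = qᵢ for every i; that is, the two null tetrahedra are congruent under an isometry of Minkowski spacetime. -/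
namespace LinearMap.BilinForm

variable {K M : Type*} [Field K] [AddCommGroup M] [Module K M] (B : LinearMap.BilinForm K M)

def nullRotation (n a : M) : Module.End K M :=
  LinearMap.id - (B n).smulRight a + (B a).smulRight n -
    ((2 : K)⁻¹ * B a a) • (B n).smulRight n

theorem nullRotation_apply (n a v : M) :
    B.nullRotation n a v =
      v - B n v • a + B a v • n - ((2 : K)⁻¹ * B a a * B n v) • n := by
  simp [nullRotation, mul_smul]

theorem nullRotation_apply_of_apply_eq_zero {n v : M} (a : M) (hv : B n v = 0) :
    B.nullRotation n a v = v + B a v • n := by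
  simp [nullRotation_apply, hv]

/-- When `n`, `m` are null with `B n m = 1`, this scales `n` by `c` and `m` by `c⁻¹` and fixes
their orthogonal complement. -/
def nullBoost (n m : M) (c : K) : Module.End K M :=
  LinearMap.id + (c - 1) • (B m).smulRight n + (c⁻¹ - 1) • (B n).smulRight m

theorem nullBoost_apply (n m v : M) (c : K) :
    B.nullBoost n m c v = v + ((c - 1) * B m v) • n + ((c⁻¹ - 1) * B n v) • m := by
  simp [nullBoost, mul_smul]

theorem nullBoost_apply_of_apply_eq_zero {n v : M} (m : M) (c : K) (hv : B n v = 0) :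
    B.nullBoost n m c v = v + ((c - 1) * B m v) • n := by
  simp [nullBoost_apply, hv]

variable {B}

theorem isOrthogonal_nullRotation [NeZero (2 : K)] (hB : B.IsSymm) {n a : M} (hn : B n n = 0)
    (hna : B n a = 0) : B.IsOrthogonal (B.nullRotation n a) := by
  intro x y
  have han : B a n = 0 := by rw [hB.eq, hna]
  simp only [nullRotation_apply, map_add, map_sub, map_smul, LinearMap.add_apply,
    LinearMap.sub_apply, LinearMap.smul_apply, smul_eq_mul, hn, hna, han, hB.eq a x, hB.eq n x]
  field_simp
  ring

theorem isOrthogonal_nullBoost (hB : B.IsSymm) {n m : M} (hn : B n n = 0) (hm : B m m = 0)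
    (hnm : B n m = 1) {c : K} (hc : c ≠ 0) : B.IsOrthogonal (B.nullBoost n m c) := by
  intro x y
  have hmn : B m n = 1 := by rw [hB.eq, hnm]
  simp only [nullBoost_apply, map_add, map_smul, LinearMap.add_apply,
    LinearMap.smul_apply, smul_eq_mul, hn, hm, hnm, hmn, hB.eq x n, hB.eq x m]
  field_simp
  ring

end LinearMap.BilinForm

theorem LinearMap.IsOrthogonal.comp {R M : Type*} [CommRing R] [AddCommGroup M] [Module R M]
    {B : LinearMap.BilinForm R M} {f g : Module.End R M} (hf : B.IsOrthogonal f)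
    (hg : B.IsOrthogonal g) : B.IsOrthogonal (f ∘ₗ g) :=
  fun x y => (hf (g x) (g y)).trans (hg x y)

open LinearMap.BilinForm

def minkowskiForm : LinearMap.BilinForm ℝ (Fin 4 → ℝ) :=
  Matrix.toBilin' (Matrix.diagonal ![-1, 1, 1, 1])

theorem minkowskiForm_apply (x y : Fin 4 → ℝ) : minkowskiForm x y = eta x y := by
  simp [minkowskiForm, Matrix.toBilin'_apply', dotProduct, Matrix.mulVec_diagonal,
    Fin.sum_univ_four, eta]

theorem minkowskiForm_isSymm : minkowskiForm.IsSymm :=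
  isSymm_def.2 fun x y => by simp only [minkowskiForm_apply, eta]; ring

theorem exists_isOrthogonal_minkowskiForm_shear (c A B : ℝ) (hc : c ≠ 0) :
    ∃ Λ : Module.End ℝ (Fin 4 → ℝ), minkowskiForm.IsOrthogonal Λ ∧
      ∀ v, v 0 = v 3 → Λ v = v + ((c - 1) * v 0 + A * v 1 + B * v 2) • ![1, 0, 0, 1] := by
  have hn : ∀ v, minkowskiForm ![1, 0, 0, 1] v = v 3 - v 0 := fun v => by
    simp [minkowskiForm_apply, eta]; ring
  refine ⟨minkowskiForm.nullRotation ![1, 0, 0, 1] ![0, A, B, 0] ∘ₗ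
    minkowskiForm.nullBoost ![1, 0, 0, 1] ![-1/2, 0, 0, 1/2] c, ?_, fun v hv => ?_⟩
  · exact (isOrthogonal_nullRotation minkowskiForm_isSymm (by simp [hn]) (by simp [hn])).comp
      (isOrthogonal_nullBoost minkowskiForm_isSymm (by simp [hn])
        (by simp [minkowskiForm_apply, eta]; norm_num) (by simp [hn]; norm_num) hc)
  · have hnv : minkowskiForm ![1, 0, 0, 1] v = 0 := by rw [hn, hv, sub_self]
    rw [LinearMap.comp_apply, nullBoost_apply_of_apply_eq_zero _ _ _ hnv,
      nullRotation_apply_of_apply_eq_zero _ _ (by rw [hn]; simp [hv]), add_assoc, ← add_smul]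
    congr 2
    simp [minkowskiForm_apply, eta, hv, Matrix.vecHead, Matrix.vecTail]
    ring

/-- The coordinates `(u, x, y)` of a point `(u, x, y, u)` of the null hyperplane `t = z`. -/
def nullHyperplaneCoords : (Fin 4 → ℝ) →ₗ[ℝ] (Fin 3 → ℝ) :=
  LinearMap.funLeft ℝ ℝ Fin.castSucc

/-- `(u, x, y) ↦ (u, x, y, u)`. -/
def nullHyperplaneParam : (Fin 3 → ℝ) →ₗ[ℝ] (Fin 4 → ℝ) :=
  LinearMap.funLeft ℝ ℝ ![0, 1, 2, 0]

theorem nullHyperplaneParam_coords {v : Fin 4 → ℝ} (hv : v 0 = v 3) :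
    nullHyperplaneParam (nullHyperplaneCoords v) = v := by
  ext j
  fin_cases j <;> simp [nullHyperplaneParam, nullHyperplaneCoords, LinearMap.funLeft_apply, hv]

theorem exists_isOrthogonal_minkowskiForm_apply_nullHyperplaneParam
    (T : Module.End ℝ (Fin 3 → ℝ)) (hT : Function.Injective T)
    (h1 : ∀ v, T v 1 = v 1) (h2 : ∀ v, T v 2 = v 2) :
    ∃ Λ : Module.End ℝ (Fin 4 → ℝ), minkowskiForm.IsOrthogonal Λ ∧
      ∀ v, Λ (nullHyperplaneParam v) = nullHyperplaneParam (T v) := by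
  set e : Fin 3 → Fin 3 → ℝ := fun i j => if i = j then 1 else 0
  have hT0 : ∀ v, T v 0 = v 0 * T (e 0) 0 + v 1 * T (e 1) 0 + v 2 * T (e 2) 0 := by
    intro v
    simpa [e, Fin.sum_univ_three, mul_comm] using
      (LinearMap.proj 0 ∘ₗ T).pi_apply_eq_sum_univ v
  have hc : T (e 0) 0 ≠ 0 := by
    intro h
    have : T (e 0) = T 0 := by ext j; fin_cases j <;> simp [e, h, h1, h2]
    simpa [e] using congrFun (hT this) 0
  obtain ⟨Λ, hΛ, hΛv⟩ := exists_isOrthogonal_minkowskiForm_shear _ (T (e 1) 0) (T (e 2) 0) hc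
  refine ⟨Λ, hΛ, fun v => ?_⟩
  rw [hΛv _ rfl]
  ext j
  fin_cases j <;> simp [nullHyperplaneParam, LinearMap.funLeft_apply, hT0 v, h1, h2] <;> ring

theorem linearIndependent_nullHyperplaneCoords_vsub {ι : Type*} {p : ι → Fin 4 → ℝ}
    (hpH : ∀ i, p i 0 = p i 3) (hp : AffineIndependent ℝ p) (i₀ : ι) :
    LinearIndependent ℝ fun i : {i // i ≠ i₀} => nullHyperplaneCoords (p i - p i₀) := by
  have hcomp :
      nullHyperplaneParam ∘ (fun i : {i // i ≠ i₀} => nullHyperplaneCoords (p i - p i₀)) =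
        fun i : {i // i ≠ i₀} => p i -ᵥ p i₀ :=
    funext fun i => nullHyperplaneParam_coords (by simp [hpH])
  exact LinearIndependent.of_comp nullHyperplaneParam
    (hcomp ▸ (affineIndependent_iff_linearIndependent_vsub ℝ p i₀).mp hp)

theorem exists_linearEquiv_nullHyperplaneCoords {p q : Fin 4 → Fin 4 → ℝ}
    (hpH : ∀ i, p i 0 = p i 3) (hqH : ∀ i, q i 0 = q i 3)
    (hp : AffineIndependent ℝ p) (hq : AffineIndependent ℝ q)
    (hx : ∀ i, p i 1 = q i 1) (hy : ∀ i, p i 2 = q i 2) :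
    ∃ T : (Fin 3 → ℝ) ≃ₗ[ℝ] (Fin 3 → ℝ), (∀ v, T v 1 = v 1) ∧ (∀ v, T v 2 = v 2) ∧
      ∀ i, T (nullHyperplaneCoords (p i - p 0)) = nullHyperplaneCoords (q i - q 0) := by
  have : Nonempty {i : Fin 4 // i ≠ 0} := ⟨⟨1, one_ne_zero⟩⟩
  have hcard : Fintype.card {i : Fin 4 // i ≠ 0} = Module.finrank ℝ (Fin 3 → ℝ) := by simp
  let bp := basisOfLinearIndependentOfCardEqFinrank
    (linearIndependent_nullHyperplaneCoords_vsub hpH hp 0) hcard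
  let bq := basisOfLinearIndependentOfCardEqFinrank
    (linearIndependent_nullHyperplaneCoords_vsub hqH hq 0) hcard
  let T := bp.equiv bq (Equiv.refl _)
  have hT : ∀ i : {i : Fin 4 // i ≠ 0},
      T (nullHyperplaneCoords (p i - p 0)) = nullHyperplaneCoords (q i - q 0) := fun i => by
    simpa only [bp, bq, coe_basisOfLinearIndependentOfCardEqFinrank, Equiv.refl_apply]
      using bp.equiv_apply i bq (Equiv.refl _)
  have hfix (j : Fin 3) (hj : ∀ i, p i j.castSucc = q i j.castSucc) (v) : T v j = v j := by
    have : LinearMap.proj j ∘ₗ T.toLinearMap = LinearMap.proj j := bp.ext fun i => by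
      simp only [bp, coe_basisOfLinearIndependentOfCardEqFinrank, LinearMap.comp_apply,
        LinearEquiv.coe_coe, hT]
      simp [nullHyperplaneCoords, LinearMap.funLeft_apply, hj]
    exact LinearMap.congr_fun this v
  refine ⟨T, hfix 1 hx, hfix 2 hy, fun i => ?_⟩
  rcases eq_or_ne i 0 with rfl | hi
  · simp
  · exact hT ⟨i, hi⟩

/-- A null tetrahedron is completely determined by its planar image: if two
affinely independent quadruples of points lie in the null hyperplane
`H = {t = z}` and have the same planar images (the same `(x,y)` coordinates,
i.e. the same lightrays in the quotient plane), then they are congruent under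
an isometry of Minkowski spacetime: a linear map preserving `η` followed by a
translation. -/
theorem null_tetrahedron_determined_by_planar_image
    (p q : Fin 4 → Fin 4 → ℝ)
    (hpH : ∀ i, p i 0 = p i 3) (hqH : ∀ i, q i 0 = q i 3)
    (hp : AffineIndependent ℝ p) (hq : AffineIndependent ℝ q)
    (hx : ∀ i, p i 1 = q i 1) (hy : ∀ i, p i 2 = q i 2) :
    ∃ (Λ : (Fin 4 → ℝ) →ₗ[ℝ] (Fin 4 → ℝ)) (w : Fin 4 → ℝ),
      (∀ x y : Fin 4 → ℝ, eta (Λ x) (Λ y) = eta x y) ∧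
      ∀ i, Λ (p i) + w = q i := by
  obtain ⟨T, hT1, hT2, hTpq⟩ := exists_linearEquiv_nullHyperplaneCoords hpH hqH hp hq hx hy
  obtain ⟨Λ, hΛ, hΛT⟩ :=
    exists_isOrthogonal_minkowskiForm_apply_nullHyperplaneParam T T.injective hT1 hT2
  refine ⟨Λ, q 0 - Λ (p 0), fun x y => by simpa only [minkowskiForm_apply] using hΛ x y,
    fun i => ?_⟩
  have hΛpq : Λ (p i - p 0) = q i - q 0 := by
    rw [← nullHyperplaneParam_coords (v := p i - p 0) (by simp [hpH]), hΛT, LinearEquiv.coe_coe,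
      hTpq, nullHyperplaneParam_coords (by simp [hqH])]
  rw [map_sub] at hΛpq
  linear_combination hΛpq
end
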